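/- arXiv:math/0702314 — 4 statements merged into one kernel-verified Lean document; each statement's English description precedes it below -/
import Mathlib

section
/- Let y : ℕⁿ → ℝ be such that the moment matrix M_d(y) is positive definite and has the product form property. Then for all multi-indices α, β with |α| ≤ d and |β| ≤ d such that |max(α,β)| > d (equivalently, the least common multiple of X^α and X^β has degree greater than d), the (α,β) entry of the inverse matrix M_d(y)⁻¹ is zero. (Forward direction of Theorem 3.1.) -/
open scoped BigOperators
open MvPolynomial Matrix

namespace Paper

/-- Total degree `|α|` of a multi-index `α`. -/
def degSum {n : ℕ} (α : Fin n → ℕ) : ℕ := ∑ i, α i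

lemma apply_le_degSum {n : ℕ} (α : Fin n → ℕ) (i : Fin n) : α i ≤ degSum α :=
  Finset.single_le_sum (fun _ _ => Nat.zero_le _) (Finset.mem_univ i)

noncomputable instance midxFintype (n d : ℕ) : Fintype {α : Fin n → ℕ // degSum α ≤ d} :=
  Fintype.ofInjective
    (fun a => (fun i => (⟨a.1 i, Nat.lt_succ_of_le (le_trans (apply_le_degSum a.1 i) a.2)⟩ :
        Fin (d+1))))
    (fun a b h => Subtype.ext (funext fun i => congrArg Fin.val (congrFun h i)))

/-- The index set of the truncated moment matrix: multi-indices of total degree at most `d`. -/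
abbrev MIdx (n d : ℕ) := {α : Fin n → ℕ // degSum α ≤ d}

/-- The truncated moment matrix `M_d(y)`. -/
def momMat (n d : ℕ) (y : (Fin n → ℕ) → ℝ) : Matrix (MIdx n d) (MIdx n d) ℝ :=
  Matrix.of fun a b => y (a.1 + b.1)

/-- The Riesz functional `L_y` on multivariate polynomials. -/
noncomputable def Ly {n : ℕ} (y : (Fin n → ℕ) → ℝ) (p : MvPolynomial (Fin n) ℝ) : ℝ :=
  ∑ m ∈ p.support, p.coeff m * y (fun i => m i)

/-- The monomial `X^α`. -/
noncomputable def mono {n : ℕ} (α : Fin n → ℕ) : MvPolynomial (Fin n) ℝ := ∏ i, X i ^ α i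

/-- The coefficient of `X^γ` in `p`. -/
noncomputable def coeffOf {n : ℕ} (p : MvPolynomial (Fin n) ℝ) (γ : Fin n → ℕ) : ℝ :=
  p.coeff (Finsupp.equivFunOnFinite.symm γ)

/-- Strict lexicographic order on multi-indices. -/
def lexLT {n : ℕ} (α β : Fin n → ℕ) : Prop :=
  ∃ i, (∀ j, j < i → α j = β j) ∧ α i < β i

/-- Strict graded lexicographic (GLex) order on multi-indices. -/
def glexLT {n : ℕ} (α β : Fin n → ℕ) : Prop :=
  degSum α < degSum β ∨ (degSum α = degSum β ∧ lexLT α β)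

/-- Graded lexicographic order (reflexive version). -/
def glexLE {n : ℕ} (α β : Fin n → ℕ) : Prop := glexLT α β ∨ α = β

/-- The product form (independence) property of `M_d(y)`:
`L_y(X^α) = ∏_i L_y(X_i^{α_i})` for all `|α| ≤ 2d`. -/
def ProductForm (n d : ℕ) (y : (Fin n → ℕ) → ℝ) : Prop :=
  ∀ α : Fin n → ℕ, degSum α ≤ 2*d → y α = ∏ i, y (Pi.single i (α i))

/-- The family of orthonormal polynomials `(p_α)_{|α| ≤ d}` associated with `y`:
GLex-triangular, orthonormal, orthogonal to lower monomials, positive leading term. -/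
structure IsONFamily (n d : ℕ) (y : (Fin n → ℕ) → ℝ)
    (p : (Fin n → ℕ) → MvPolynomial (Fin n) ℝ) : Prop where
  span : ∀ α, degSum α ≤ d → ∀ γ : Fin n → ℕ, coeffOf (p α) γ ≠ 0 → glexLE γ α
  orth : ∀ α β, degSum α ≤ d → degSum β ≤ d →
    Ly y (p α * p β) = if α = β then 1 else 0
  lower : ∀ α β, degSum α ≤ d → degSum β ≤ d → glexLT β α → Ly y (p α * mono β) = 0
  pos : ∀ α, degSum α ≤ d → 0 < Ly y (p α * mono α)


section Aux
variable {l m : Type*} [Fintype l] [Fintype m] [DecidableEq l] [DecidableEq m]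

private lemma sum_extend (e : l → m) (he : Function.Injective e) (x : l → ℝ) (f : m → ℝ) :
    ∑ a, (∑ j, if e j = a then x j else 0) * f a = ∑ j, x j * f (e j) := by
  calc ∑ a, (∑ j, if e j = a then x j else 0) * f a
      = ∑ a, ∑ j, (if e j = a then x j * f a else 0) := by
        refine Finset.sum_congr rfl fun a _ => ?_
        rw [Finset.sum_mul]
        exact Finset.sum_congr rfl fun j _ => by split <;> simp
    _ = ∑ j, ∑ a, (if e j = a then x j * f a else 0) := Finset.sum_comm
    _ = ∑ j, x j * f (e j) := by
        refine Finset.sum_congr rfl fun j _ => ?_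
        rw [Finset.sum_ite_eq]
        simp

private lemma posDef_submatrix {M : Matrix m m ℝ} (hM : M.PosDef) (e : l → m)
    (he : Function.Injective e) : (M.submatrix e e).PosDef := by
  refine Matrix.PosDef.of_dotProduct_mulVec_pos (hM.1.submatrix e) fun x hx => ?_
  set x' : m → ℝ := fun a => ∑ j, if e j = a then x j else 0 with hx'def
  have hx'e : ∀ j, x' (e j) = x j := by
    intro j
    simp only [hx'def, he.eq_iff]
    rw [Finset.sum_ite_eq']
    simp
  have hx'0 : x' ≠ 0 := by
    obtain ⟨j, hj⟩ := Function.ne_iff.mp hx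
    intro h0
    exact hj (by rw [← hx'e j, h0]; simp)
  have inner : ∀ a, (∑ b, M a b * x' b) = ∑ k, M a (e k) * x k := by
    intro a
    calc ∑ b, M a b * x' b = ∑ b, x' b * M a b := by
          exact Finset.sum_congr rfl fun b _ => mul_comm _ _
      _ = ∑ k, x k * M a (e k) := sum_extend e he x (fun b => M a b)
      _ = ∑ k, M a (e k) * x k := Finset.sum_congr rfl fun k _ => mul_comm _ _
  have key : star x ⬝ᵥ (M.submatrix e e) *ᵥ x = star x' ⬝ᵥ M *ᵥ x' := by
    simp only [star_trivial, dotProduct, mulVec, submatrix_apply]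
    simp only [inner]
    exact (sum_extend e he x (fun a => ∑ k, M a (e k) * x k)).symm
  rw [key]
  exact hM.dotProduct_mulVec_pos hx'0

private lemma posDef_conj {k : Type*} [Fintype k] [DecidableEq k] {A B : Matrix k k ℝ}
    (hA : A.PosDef) [Invertible B] : (B * A * Bᴴ).PosDef := by
  have herm : (B * A * Bᴴ).IsHermitian := by
    simpa only [conjTranspose_conjTranspose] using isHermitian_conjTranspose_mul_mul Bᴴ hA.1
  refine Matrix.PosDef.of_dotProduct_mulVec_pos herm fun x hx => ?_
  have h1 : Bᴴ *ᵥ x ≠ 0 := by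
    intro h
    apply hx
    have : Invertible Bᴴ := by infer_instance
    have := congrArg (fun v => (Bᴴ)⁻¹ *ᵥ v) h
    simpa [Matrix.mulVec_mulVec, Matrix.nonsing_inv_mul _ (isUnit_det_of_invertible Bᴴ)] using this
  have := hA.dotProduct_mulVec_pos h1
  simpa only [star_mulVec, dotProduct_mulVec, vecMul_vecMul, conjTranspose_conjTranspose,
    Matrix.mul_assoc, mulVec_mulVec] using this
end Aux

section DisableFinDec
attribute [-instance] instDecidableEqFin

private lemma exists_C {m : ℕ} {S : Matrix (Fin m) (Fin m) ℝ} (hS : S.PosDef) :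
    ∃ C : Matrix (Fin m) (Fin m) ℝ, (∀ j k, j < k → C j k = 0) ∧ C * S * Cᵀ = 1 := by
  haveI : WellFoundedLT (Fin m) := Finite.to_wellFoundedLT
  haveI : Invertible (LDL.lowerInv hS) := LDL.invertibleLowerInv hS
  have hdiag : (LDL.diag hS).PosDef := by
    rw [LDL.diag_eq_lowerInv_conj]
    exact posDef_conj hS (B := LDL.lowerInv hS)
  have hD : ∀ j, 0 < LDL.diagEntries hS j := by
    have h2 := hdiag
    rw [LDL.diag] at h2
    exact Matrix.posDef_diagonal_iff.mp h2
  set s : Fin m → ℝ := fun j => (Real.sqrt (LDL.diagEntries hS j))⁻¹ with hs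
  refine ⟨Matrix.diagonal s * LDL.lowerInv hS, ?_, ?_⟩
  · intro j k hjk
    rw [Matrix.diagonal_mul, LDL.lowerInv_triangular hS hjk, mul_zero]
  · have hLSL : LDL.lowerInv hS * S * (LDL.lowerInv hS)ᵀ = LDL.diag hS := by
      rw [← Matrix.conjTranspose_eq_transpose_of_trivial]
      exact (LDL.diag_eq_lowerInv_conj hS).symm
    have hpt : (fun j => s j * LDL.diagEntries hS j * s j) = fun _ => (1:ℝ) := by
      funext j
      have hDj := hD j
      calc s j * LDL.diagEntries hS j * s j
          = LDL.diagEntries hS j / (Real.sqrt (LDL.diagEntries hS j) *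
              Real.sqrt (LDL.diagEntries hS j)) := by rw [hs]; ring
        _ = LDL.diagEntries hS j / LDL.diagEntries hS j := by rw [Real.mul_self_sqrt hDj.le]
        _ = 1 := div_self (ne_of_gt hDj)
    calc (Matrix.diagonal s * LDL.lowerInv hS) * S * (Matrix.diagonal s * LDL.lowerInv hS)ᵀ
        = Matrix.diagonal s * (LDL.lowerInv hS * S * (LDL.lowerInv hS)ᵀ) *
            Matrix.diagonal s := by
          rw [Matrix.transpose_mul, Matrix.diagonal_transpose]
          simp only [Matrix.mul_assoc]
      _ = Matrix.diagonal s * LDL.diag hS * Matrix.diagonal s := by rw [hLSL]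
      _ = 1 := by
          rw [LDL.diag, Matrix.diagonal_mul_diagonal, Matrix.diagonal_mul_diagonal, hpt,
            Matrix.diagonal_one]

end DisableFinDec

/-- Index of a multi-index as a tuple of `Fin (d+1)`. -/
def idx {n d : ℕ} (a : MIdx n d) (i : Fin n) : Fin (d+1) :=
  ⟨a.1 i, Nat.lt_succ_of_le (le_trans (apply_le_degSum a.1 i) a.2)⟩

lemma idx_injective {n d : ℕ} : Function.Injective (idx (n := n) (d := d)) :=
  fun a b h => Subtype.ext (funext fun i => congrArg Fin.val (congrFun h i))

lemma sum_midx_eq {n d : ℕ} (F : (Fin n → Fin (d+1)) → ℝ)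
    (h0 : ∀ g, d < ∑ i, (g i : ℕ) → F g = 0) :
    ∑ b : MIdx n d, F (idx b) = ∑ g, F g := by
  classical
  have h1 : ∑ b : MIdx n d, F (idx b) = ∑ g ∈ Finset.univ.image idx, F g :=
    (Finset.sum_image fun x _ y _ hxy => idx_injective hxy).symm
  rw [h1]
  refine Finset.sum_subset (Finset.subset_univ _) fun g _ hg => ?_
  by_contra hne
  have hle : degSum (fun i => (g i : ℕ)) ≤ d := by
    by_contra hgt
    exact hne (h0 g (lt_of_not_ge fun hh => hgt (by simpa [degSum] using hh)))
  apply hg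
  refine Finset.mem_image.mpr ⟨⟨fun i => (g i : ℕ), hle⟩, Finset.mem_univ _, ?_⟩
  funext i
  exact Fin.ext rfl

set_option maxHeartbeats 1000000

/-- **Theorem 3.1 (forward direction).** If `M_d(y)` is positive definite and has the
product form property, and `|max(α,β)| > d`, then the `(α,β)` entry of `M_d(y)⁻¹` is zero. -/
theorem stmt0 (n d : ℕ) (hn : 1 ≤ n) (y : (Fin n → ℕ) → ℝ)
    (hpd : (momMat n d y).PosDef) (hprod : ProductForm n d y)
    (a b : MIdx n d)
    (h : d < degSum (fun i => max (a.1 i) (b.1 i))) :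
    (momMat n d y)⁻¹ a b = 0 := by
  classical
  -- the univariate Hankel matrices
  set H : Fin n → Matrix (Fin (d+1)) (Fin (d+1)) ℝ := fun i =>
    Matrix.of fun j k => y (Pi.single i ((j : ℕ) + (k : ℕ))) with hHdef
  have hdeg_single : ∀ (i : Fin n) (k : ℕ), degSum (Pi.single i k) = k := by
    intro i k
    simp [degSum, Finset.sum_pi_single']
  have hemb : ∀ (i : Fin n) (j : Fin (d+1)), degSum (Pi.single i (j : ℕ)) ≤ d := by
    intro i j
    rw [hdeg_single]
    exact Nat.lt_succ_iff.mp j.2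
  have hHpd : ∀ i, (H i).PosDef := by
    intro i
    have he : Function.Injective (fun j : Fin (d+1) =>
        (⟨Pi.single i (j : ℕ), hemb i j⟩ : MIdx n d)) := by
      intro j k h
      have h2 := congrFun (congrArg Subtype.val h) i
      simp only [Pi.single_eq_same] at h2
      exact Fin.ext h2
    have hsub : H i = (momMat n d y).submatrix
        (fun j : Fin (d+1) => (⟨Pi.single i (j : ℕ), hemb i j⟩ : MIdx n d))
        (fun j : Fin (d+1) => (⟨Pi.single i (j : ℕ), hemb i j⟩ : MIdx n d)) := by
      ext j k
      simp only [hHdef, Matrix.of_apply, Matrix.submatrix_apply, momMat]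
      rw [Pi.single_add]
    rw [hsub]
    exact posDef_submatrix hpd _ he
  -- the univariate triangular congruence matrices
  choose C1 hC1tri hC1conj using fun i => exists_C (hHpd i)
  -- the big triangular matrix
  set Cb : Matrix (MIdx n d) (MIdx n d) ℝ :=
    Matrix.of fun a b => ∏ i, C1 i (idx a i) (idx b i) with hCbdef
  -- vanishing of rows beyond degree d
  have hvan : ∀ (a : MIdx n d) (g : Fin n → Fin (d+1)), d < ∑ i, (g i : ℕ) →
      ∃ i, C1 i (idx a i) (g i) = 0 := by
    intro a g hg
    by_contra hno
    push_neg at hno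
    have hle : ∀ i, (g i : ℕ) ≤ a.1 i := by
      intro i
      by_contra hlt
      push_neg at hlt
      exact hno i (hC1tri i (idx a i) (g i) (by exact hlt))
    have h3 : ∑ i, (g i : ℕ) ≤ degSum a.1 := Finset.sum_le_sum fun i _ => hle i
    exact Nat.lt_irrefl _ (lt_of_lt_of_le hg (le_trans h3 a.2))
  -- the big congruence identity
  have hone : Cb * momMat n d y * Cbᵀ = 1 := by
    ext p q
    set G : Fin n → Fin (d+1) → Fin (d+1) → ℝ :=
      fun i j k => C1 i (idx p i) j * H i j k * C1 i (idx q i) k with hGdef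
    have hterm : ∀ g h' : MIdx n d,
        Cb p g * momMat n d y g h' * Cb q h' = ∏ i, G i (idx g i) (idx h' i) := by
      intro g h'
      have hy : momMat n d y g h' = ∏ i, H i (idx g i) (idx h' i) := by
        have hdeg : degSum (g.1 + h'.1) ≤ 2*d := by
          have hadd : degSum (g.1 + h'.1) = degSum g.1 + degSum h'.1 := by
            simp [degSum, Finset.sum_add_distrib]
          have := g.2; have := h'.2
          omega
        have hp := hprod (g.1 + h'.1) hdeg
        simpa [momMat, hHdef, idx] using hp
      rw [hCbdef, Matrix.of_apply, Matrix.of_apply, hy, hGdef,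
        ← Finset.prod_mul_distrib, ← Finset.prod_mul_distrib]
    have e1 : (Cb * momMat n d y * Cbᵀ) p q
        = ∑ g : MIdx n d, ∑ h' : MIdx n d, ∏ i, G i (idx g i) (idx h' i) := by
      simp only [Matrix.mul_apply, Matrix.transpose_apply, Finset.sum_mul]
      rw [Finset.sum_comm]
      exact Finset.sum_congr rfl fun g _ => Finset.sum_congr rfl fun h' _ => hterm g h'
    have e2 : ∀ g : MIdx n d,
        ∑ h' : MIdx n d, ∏ i, G i (idx g i) (idx h' i)
          = ∑ t : Fin n → Fin (d+1), ∏ i, G i (idx g i) (t i) := by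
      intro g
      refine sum_midx_eq (fun t => ∏ i, G i (idx g i) (t i)) fun t ht => ?_
      obtain ⟨i, hi⟩ := hvan q t ht
      exact Finset.prod_eq_zero (Finset.mem_univ i) (by rw [hGdef]; simp [hi])
    have e3 : ∑ g : MIdx n d, ∑ t : Fin n → Fin (d+1), ∏ i, G i (idx g i) (t i)
        = ∑ t0 : Fin n → Fin (d+1), ∑ t : Fin n → Fin (d+1), ∏ i, G i (t0 i) (t i) := by
      refine sum_midx_eq (fun t0 => ∑ t : Fin n → Fin (d+1), ∏ i, G i (t0 i) (t i))
        fun t0 ht0 => Finset.sum_eq_zero fun t _ => ?_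
      obtain ⟨i, hi⟩ := hvan p t0 ht0
      exact Finset.prod_eq_zero (Finset.mem_univ i) (by rw [hGdef]; simp [hi])
    have e4 : ∑ t0 : Fin n → Fin (d+1), ∑ t : Fin n → Fin (d+1), ∏ i, G i (t0 i) (t i)
        = ∏ i, ∑ j, ∑ k, G i j k := by
      have i1 : ∀ t0 : Fin n → Fin (d+1),
          ∑ t : Fin n → Fin (d+1), ∏ i, G i (t0 i) (t i)
            = ∏ i, ∑ k, G i (t0 i) k := fun t0 =>
        (Fintype.prod_sum (κ := fun _ : Fin n => Fin (d+1)) (fun i k => G i (t0 i) k)).symm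
      simp only [i1]
      exact (Fintype.prod_sum (κ := fun _ : Fin n => Fin (d+1))
        (fun i j => ∑ k, G i j k)).symm
    have e5 : ∀ i, ∑ j, ∑ k, G i j k = (C1 i * H i * (C1 i)ᵀ) (idx p i) (idx q i) := by
      intro i
      have : (C1 i * H i * (C1 i)ᵀ) (idx p i) (idx q i)
          = ∑ k, ∑ j, C1 i (idx p i) j * H i j k * C1 i (idx q i) k := by
        rw [Matrix.mul_apply]
        refine Finset.sum_congr rfl fun k _ => ?_
        rw [Matrix.transpose_apply, Matrix.mul_apply, Finset.sum_mul]
      rw [this, Finset.sum_comm]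
    have e6 : (1 : Matrix (MIdx n d) (MIdx n d) ℝ) p q
        = ∏ i, (C1 i * H i * (C1 i)ᵀ) (idx p i) (idx q i) := by
      simp only [hC1conj, Matrix.one_apply]
      by_cases hpq : p = q
      · subst hpq; simp
      · rw [if_neg hpq]
        obtain ⟨i, hi⟩ : ∃ i, idx p i ≠ idx q i := by
          by_contra hc
          push_neg at hc
          exact hpq (idx_injective (funext hc))
        exact (Finset.prod_eq_zero (Finset.mem_univ i) (by rw [if_neg hi])).symm
    rw [e1]
    simp only [e2]
    rw [e3, e4, e6]
    exact Finset.prod_congr rfl fun i _ => e5 i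
  -- conclude: the inverse is Cbᵀ * Cb
  have h2 : (Cbᵀ * Cb) * momMat n d y = 1 := by
    have ha : Cb * ((momMat n d y) * Cbᵀ) = 1 := by rw [← Matrix.mul_assoc]; exact hone
    have hb : ((momMat n d y) * Cbᵀ) * Cb = 1 := mul_eq_one_comm.mp ha
    have hc : momMat n d y * (Cbᵀ * Cb) = 1 := by rw [← Matrix.mul_assoc]; exact hb
    exact mul_eq_one_comm.mp hc
  rw [Matrix.inv_eq_left_inv h2, Matrix.mul_apply]
  refine Finset.sum_eq_zero fun g _ => ?_
  rw [Matrix.transpose_apply]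
  by_contra hne
  obtain ⟨hga, hgb⟩ := mul_ne_zero_iff.mp hne
  have hfa : ∀ i, C1 i (idx g i) (idx a i) ≠ 0 := by
    intro i
    refine Finset.prod_ne_zero_iff.mp (by simpa [hCbdef] using hga) i (Finset.mem_univ i)
  have hfb : ∀ i, C1 i (idx g i) (idx b i) ≠ 0 := by
    intro i
    refine Finset.prod_ne_zero_iff.mp (by simpa [hCbdef] using hgb) i (Finset.mem_univ i)
  have hmax : ∀ i, max (a.1 i) (b.1 i) ≤ g.1 i := by
    intro i
    have h1 : a.1 i ≤ g.1 i := by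
      by_contra hlt
      push_neg at hlt
      exact hfa i (hC1tri i (idx g i) (idx a i) hlt)
    have hB : b.1 i ≤ g.1 i := by
      by_contra hlt
      push_neg at hlt
      exact hfb i (hC1tri i (idx g i) (idx b i) hlt)
    exact max_le h1 hB
  have : degSum (fun i => max (a.1 i) (b.1 i)) ≤ degSum g.1 :=
    Finset.sum_le_sum fun i _ => hmax i
  exact Nat.lt_irrefl _ (lt_of_lt_of_le h (le_trans this g.2))


end Paper
end

section
/- Let α, β ∈ ℕⁿ be multi-indices with |α| ≤ d, |β| ≤ d and |max(α,β)| ≤ d. Then there exists y : ℕⁿ → ℝ such that the moment matrix M_d(y) is positive definite and has the product form property, and the (α,β) entry of M_d(y)⁻¹ is nonzero. Moreover, y can be chosen to be the moment sequence y_γ = ∫_{ℝ₊ⁿ} x^γ e^{-(x₁+⋯+xₙ)} x₁^{σ₁}⋯xₙ^{σₙ} dx of a product measure on the positive orthant, normalized to total mass 1, for a suitable parameter σ ∈ ℝ₊ⁿ. (Converse direction of Theorem 3.1.) -/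
open scoped BigOperators
open MvPolynomial Matrix

namespace Paper

open MeasureTheory

noncomputable def lagC (k j : ℕ) : ℝ := (-1)^j * (k.choose j) / (j.factorial)
noncomputable def momA (i j : ℕ) : ℝ := (-1)^j * (i.factorial) * (i.choose j)

lemma lagC_eq_zero {k j : ℕ} (h : k < j) : lagC k j = 0 := by
  simp [lagC, Nat.choose_eq_zero_of_lt h]

lemma momA_eq_zero {i j : ℕ} (h : i < j) : momA i j = 0 := by
  simp [momA, Nat.choose_eq_zero_of_lt h]

lemma real_alt_sum (m : ℕ) :
    ∑ t ∈ Finset.range (m+1), ((-1:ℝ))^t * (m.choose t) = if m = 0 then 1 else 0 := by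
  have := @Int.alternating_sum_range_choose m
  have h2 : ((∑ t ∈ Finset.range (m+1), ((-1:ℤ))^t * (m.choose t) : ℤ) : ℝ)
      = ((if m = 0 then 1 else 0 : ℤ) : ℝ) := by rw [this]
  push_cast at h2
  convert h2 using 2

lemma sum_sign_choose_choose (k m N : ℕ) (hk : k ≤ N) :
    ∑ j ∈ Finset.range (N+1), ((-1:ℝ))^j * (k.choose j) * (j.choose m) =
      if k = m then ((-1:ℝ))^m else 0 := by
  by_cases hmk : m ≤ k
  · have hsub : Finset.Ico m (k+1) ⊆ Finset.range (N+1) := by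
      intro j hj
      simp only [Finset.mem_Ico] at hj
      exact Finset.mem_range.2 (lt_of_lt_of_le hj.2 (by omega))
    rw [← Finset.sum_subset hsub]
    · rw [Finset.sum_Ico_eq_sum_range]
      have hstep : ∀ t ∈ Finset.range (k + 1 - m),
          ((-1:ℝ))^(m+t) * (k.choose (m+t)) * ((m+t).choose m)
            = ((-1:ℝ))^m * (k.choose m) * (((-1:ℝ))^t * ((k-m).choose t)) := by
        intro t ht
        have h1 : m + t ≤ k := by
          have := Finset.mem_range.1 ht; omega
        have h2 : (k.choose (m+t)) * ((m+t).choose m)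
            = (k.choose m) * ((k-m).choose (m+t-m)) := Nat.choose_mul (n := k) (Nat.le_add_right m t)
        have h3 : m + t - m = t := by omega
        rw [h3] at h2
        have : ((k.choose (m+t) : ℝ)) * ((m+t).choose m) = (k.choose m : ℝ) * ((k-m).choose t) := by
          exact_mod_cast congrArg (Nat.cast : ℕ → ℝ) h2
        rw [pow_add]
        linear_combination ((-1:ℝ))^m * ((-1:ℝ))^t * this
      rw [Finset.sum_congr rfl hstep, ← Finset.mul_sum]
      have hr : k + 1 - m = (k - m) + 1 := by omega
      rw [hr, real_alt_sum (k-m)]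
      by_cases hkm : k = m
      · simp [hkm]
      · have : ¬ (k - m = 0) := by omega
        simp [this, hkm]
    · intro j hjN hj
      simp only [Finset.mem_Ico, not_and, not_lt] at hj
      by_cases hjm : j < m
      · simp [Nat.choose_eq_zero_of_lt hjm]
      · have : k < j := by omega
        simp [Nat.choose_eq_zero_of_lt this]
  · have hkm : k < m := by omega
    rw [if_neg (by omega)]
    apply Finset.sum_eq_zero
    intro j hj
    by_cases hjk : j ≤ k
    · have : j < m := by omega
      simp [Nat.choose_eq_zero_of_lt this]
    · have : k < j := by omega
      simp [Nat.choose_eq_zero_of_lt this]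

lemma oneD_CA (k m N : ℕ) (hk : k ≤ N) :
    ∑ j ∈ Finset.range (N+1), lagC k j * momA j m = if k = m then 1 else 0 := by
  have hstep : ∀ j ∈ Finset.range (N+1),
      lagC k j * momA j m = ((-1:ℝ))^m * (((-1:ℝ))^j * (k.choose j) * (j.choose m)) := by
    intro j _
    have hj : (j.factorial : ℝ) ≠ 0 := by exact_mod_cast j.factorial_ne_zero
    simp only [lagC, momA]
    field_simp
  rw [Finset.sum_congr rfl hstep, ← Finset.mul_sum, sum_sign_choose_choose k m N hk]
  by_cases h : k = m
  · simp [h, ← pow_add, ← two_mul, pow_mul]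
  · simp [h]

lemma nat_vander (i i' N : ℕ) (hi : i ≤ N) :
    ∑ j ∈ Finset.range (N+1), (i.choose j) * (i'.choose j) = (i+i').choose i := by
  have hv := Nat.add_choose_eq i' i i
  rw [Finset.Nat.sum_antidiagonal_eq_sum_range_succ_mk] at hv
  have hstep : ∀ a ∈ Finset.range (i+1), i'.choose a * i.choose (i - a) = i.choose a * i'.choose a := by
    intro a ha
    have haa : a ≤ i := by have := Finset.mem_range.1 ha; omega
    rw [Nat.choose_symm haa, Nat.mul_comm]
  rw [Finset.sum_congr rfl hstep] at hv
  have hsub : Finset.range (i+1) ⊆ Finset.range (N+1) := by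
    intro j hj; simp only [Finset.mem_range] at *; omega
  rw [← Finset.sum_subset hsub]
  · rw [← hv, Nat.add_comm i' i]
  · intro j _ hj
    have : i < j := by simp only [Finset.mem_range] at hj; omega
    simp [Nat.choose_eq_zero_of_lt this]

lemma oneD_AA (i i' N : ℕ) (hi : i ≤ N) :
    ∑ j ∈ Finset.range (N+1), momA i j * momA i' j = ((i+i').factorial : ℝ) := by
  have hstep : ∀ j ∈ Finset.range (N+1),
      momA i j * momA i' j
        = ((i.factorial : ℝ) * i'.factorial) * ((i.choose j) * (i'.choose j)) := by
    intro j _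
    have h1 : ((-1:ℝ))^j * ((-1:ℝ))^j = 1 := by
      rw [← pow_add, ← two_mul, pow_mul]; norm_num
    simp only [momA]
    linear_combination ((i.factorial:ℝ) * i'.factorial * (i.choose j) * (i'.choose j)) * h1
  rw [Finset.sum_congr rfl hstep, ← Finset.mul_sum]
  have hv : ∑ j ∈ Finset.range (N+1), ((i.choose j : ℝ)) * (i'.choose j) = ((i+i').choose i : ℝ) := by
    exact_mod_cast congrArg (Nat.cast : ℕ → ℝ) (nat_vander i i' N hi)
  rw [hv]
  have hf : (i+i').choose i * i.factorial * i'.factorial = (i+i').factorial := by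
    have := Nat.choose_mul_factorial_mul_factorial (Nat.le_add_right i i')
    simpa using this
  have := congrArg (Nat.cast : ℕ → ℝ) hf
  push_cast at this ⊢
  linarith [this]

/-- Factorization of a truncated multi-index sum into a product of 1D sums. -/
lemma sum_midx_eq_prod {n d : ℕ} (b : Fin n → ℕ) (hb : degSum b ≤ d)
    (g : Fin n → ℕ → ℝ) (hg : ∀ i t, b i < t → g i t = 0) :
    ∑ γ : MIdx n d, ∏ i, g i (γ.1 i) = ∏ i, ∑ t ∈ Finset.range (b i + 1), g i t := by
  rw [Finset.prod_univ_sum]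
  have hzero : ∀ γ : MIdx n d, γ ∈ Finset.univ \ Finset.univ.filter
      (fun γ : MIdx n d => ∀ i, γ.1 i ≤ b i) → ∏ i, g i (γ.1 i) = 0 := by
    intro γ hγ
    simp only [Finset.mem_sdiff, Finset.mem_filter, Finset.mem_univ, true_and] at hγ
    push_neg at hγ
    obtain ⟨i, hi⟩ := hγ
    exact Finset.prod_eq_zero (Finset.mem_univ i) (hg i _ (by omega))
  rw [← Finset.sum_subset (Finset.filter_subset _ _)
    (fun γ _ hγ => hzero γ (Finset.mem_sdiff.2 ⟨Finset.mem_univ _, hγ⟩))]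
  apply Finset.sum_bij (fun (γ : MIdx n d) _ => γ.1)
  · intro γ hγ
    simp only [Finset.mem_filter, Finset.mem_univ, true_and] at hγ
    simp only [Fintype.mem_piFinset, Finset.mem_range]
    intro i; exact Nat.lt_succ_of_le (hγ i)
  · intro γ₁ h₁ γ₂ h₂ h
    exact Subtype.ext h
  · intro x hx
    simp only [Fintype.mem_piFinset, Finset.mem_range] at hx
    have hxb : ∀ i, x i ≤ b i := fun i => Nat.lt_succ_iff.1 (hx i)
    have hxd : degSum x ≤ d :=
      le_trans (Finset.sum_le_sum (fun i _ => hxb i)) hb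
    exact ⟨⟨x, hxd⟩, Finset.mem_filter.2 ⟨Finset.mem_univ _, hxb⟩, rfl⟩
  · intro γ hγ; rfl

noncomputable def Cmat (n d : ℕ) : Matrix (MIdx n d) (MIdx n d) ℝ :=
  Matrix.of fun γ α => ∏ i, lagC (γ.1 i) (α.1 i)

noncomputable def Amat (n d : ℕ) : Matrix (MIdx n d) (MIdx n d) ℝ :=
  Matrix.of fun α γ => ∏ i, momA (α.1 i) (γ.1 i)

noncomputable def yfact (n : ℕ) : (Fin n → ℕ) → ℝ := fun γ => ∏ i, ((γ i).factorial : ℝ)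

lemma CA_eq_one (n d : ℕ) : Cmat n d * Amat n d = 1 := by
  ext γ δ
  rw [Matrix.mul_apply]
  have h1 : ∀ α : MIdx n d,
      Cmat n d γ α * Amat n d α δ = ∏ i, (lagC (γ.1 i) (α.1 i) * momA (α.1 i) (δ.1 i)) := by
    intro α
    simp only [Cmat, Amat, Matrix.of_apply]
    rw [Finset.prod_mul_distrib]
  rw [Finset.sum_congr rfl (fun α _ => h1 α)]
  rw [sum_midx_eq_prod γ.1 γ.2 (fun i t => lagC (γ.1 i) t * momA t (δ.1 i)) (fun i t ht => by rw [lagC_eq_zero ht, zero_mul])]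
  have h2 : ∀ i ∈ Finset.univ, ∑ t ∈ Finset.range (γ.1 i + 1), lagC (γ.1 i) t * momA t (δ.1 i)
      = if γ.1 i = δ.1 i then (1:ℝ) else 0 := fun i _ => oneD_CA _ _ _ le_rfl
  rw [Finset.prod_congr rfl h2]
  by_cases h : γ = δ
  · subst h; simp [Matrix.one_apply]
  · have : ∃ i, γ.1 i ≠ δ.1 i := by
      by_contra hc; push_neg at hc
      exact h (Subtype.ext (funext hc))
    obtain ⟨i, hi⟩ := this
    rw [Matrix.one_apply_ne h]
    exact Finset.prod_eq_zero (Finset.mem_univ i) (by simp [hi])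

lemma AA_eq_mom (n d : ℕ) : Amat n d * (Amat n d)ᵀ = momMat n d (yfact n) := by
  ext α β
  rw [Matrix.mul_apply]
  have h1 : ∀ γ : MIdx n d,
      Amat n d α γ * (Amat n d)ᵀ γ β = ∏ i, (momA (α.1 i) (γ.1 i) * momA (β.1 i) (γ.1 i)) := by
    intro γ
    simp only [Amat, Matrix.transpose_apply, Matrix.of_apply]
    rw [Finset.prod_mul_distrib]
  rw [Finset.sum_congr rfl (fun γ _ => h1 γ)]
  rw [sum_midx_eq_prod α.1 α.2 (fun i t => momA (α.1 i) t * momA (β.1 i) t) (fun i t ht => by rw [momA_eq_zero ht, zero_mul])]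
  have h2 : ∀ i ∈ Finset.univ, ∑ t ∈ Finset.range (α.1 i + 1), momA (α.1 i) t * momA (β.1 i) t
      = ((α.1 i + β.1 i).factorial : ℝ) := fun i _ => oneD_AA _ _ _ le_rfl
  rw [Finset.prod_congr rfl h2]
  simp [momMat, yfact]


lemma AC_eq_one (n d : ℕ) : Amat n d * Cmat n d = 1 :=
  mul_eq_one_comm.mp (CA_eq_one n d)

lemma mom_mul_CtC (n d : ℕ) :
    momMat n d (yfact n) * ((Cmat n d)ᵀ * Cmat n d) = 1 := by
  rw [← AA_eq_mom]
  have h : (Amat n d)ᵀ * (Cmat n d)ᵀ = 1 := by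
    rw [← Matrix.transpose_mul, CA_eq_one, Matrix.transpose_one]
  calc Amat n d * (Amat n d)ᵀ * ((Cmat n d)ᵀ * Cmat n d)
      = Amat n d * ((Amat n d)ᵀ * (Cmat n d)ᵀ) * Cmat n d := by
        rw [Matrix.mul_assoc, Matrix.mul_assoc, Matrix.mul_assoc]
    _ = Amat n d * Cmat n d := by rw [h, Matrix.mul_one]
    _ = 1 := AC_eq_one n d

lemma mom_inv (n d : ℕ) : (momMat n d (yfact n))⁻¹ = (Cmat n d)ᵀ * Cmat n d :=
  Matrix.inv_eq_right_inv (mom_mul_CtC n d)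

lemma mom_posDef (n d : ℕ) : (momMat n d (yfact n)).PosDef := by
  rw [Matrix.posDef_iff_dotProduct_mulVec]
  constructor
  · show (momMat n d (yfact n))ᴴ = _
    ext a b
    simp only [Matrix.conjTranspose_apply, momMat, Matrix.of_apply, star_trivial]
    rw [add_comm]
  · intro x hx
    have hM : momMat n d (yfact n) = Amat n d * (Amat n d)ᵀ := (AA_eq_mom n d).symm
    rw [hM]
    set v := (Amat n d)ᵀ *ᵥ x with hv
    have h1 : star x ⬝ᵥ (Amat n d * (Amat n d)ᵀ) *ᵥ x = v ⬝ᵥ v := by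
      rw [star_trivial, ← Matrix.mulVec_mulVec, Matrix.dotProduct_mulVec, ← Matrix.mulVec_transpose]
    rw [h1]
    have hvne : v ≠ 0 := by
      intro hv0
      apply hx
      have h2 : (Cmat n d)ᵀ * (Amat n d)ᵀ = 1 := by
        rw [← Matrix.transpose_mul, AC_eq_one, Matrix.transpose_one]
      calc x = ((Cmat n d)ᵀ * (Amat n d)ᵀ) *ᵥ x := by rw [h2, Matrix.one_mulVec]
        _ = (Cmat n d)ᵀ *ᵥ v := by rw [← Matrix.mulVec_mulVec, ← hv]
        _ = 0 := by rw [hv0, Matrix.mulVec_zero]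
    obtain ⟨i, hi⟩ := Function.ne_iff.mp hvne
    apply Finset.sum_pos' (fun j _ => mul_self_nonneg (v j))
    exact ⟨i, Finset.mem_univ i, mul_self_pos.2 hi⟩

lemma CtC_entry_ne_zero (n d : ℕ) (α β : Fin n → ℕ)
    (hα : degSum α ≤ d) (hβ : degSum β ≤ d)
    (h : degSum (fun i => max (α i) (β i)) ≤ d) :
    ((Cmat n d)ᵀ * Cmat n d) ⟨α, hα⟩ ⟨β, hβ⟩ ≠ 0 := by
  set s := degSum α + degSum β with hs
  have key : ∀ γ : MIdx n d,
      (Cmat n d)ᵀ ⟨α, hα⟩ γ * Cmat n d γ ⟨β, hβ⟩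
        = ((-1:ℝ))^s * ∏ i, ((((γ.1 i).choose (α i) : ℝ)) / (α i).factorial *
            ((((γ.1 i).choose (β i) : ℝ)) / (β i).factorial)) := by
    intro γ
    simp only [Cmat, Matrix.transpose_apply, Matrix.of_apply]
    rw [← Finset.prod_mul_distrib]
    have hterm : ∀ i ∈ Finset.univ,
        lagC (γ.1 i) (α i) * lagC (γ.1 i) (β i)
          = ((-1:ℝ))^(α i + β i) * ((((γ.1 i).choose (α i) : ℝ)) / (α i).factorial *
              ((((γ.1 i).choose (β i) : ℝ)) / (β i).factorial)) := by
      intro i _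
      simp only [lagC]
      rw [pow_add]
      ring
    rw [Finset.prod_congr rfl hterm, Finset.prod_mul_distrib, Finset.prod_pow_eq_pow_sum]
    congr 2
    rw [hs, degSum, degSum, ← Finset.sum_add_distrib]
  have hsum : ((Cmat n d)ᵀ * Cmat n d) ⟨α, hα⟩ ⟨β, hβ⟩
      = ((-1:ℝ))^s * ∑ γ : MIdx n d,
          ∏ i, ((((γ.1 i).choose (α i) : ℝ)) / (α i).factorial *
            ((((γ.1 i).choose (β i) : ℝ)) / (β i).factorial)) := by
    rw [Matrix.mul_apply, Finset.sum_congr rfl (fun γ _ => key γ), ← Finset.mul_sum]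
  have hpos : 0 < ∑ γ : MIdx n d,
      ∏ i, ((((γ.1 i).choose (α i) : ℝ)) / (α i).factorial *
        ((((γ.1 i).choose (β i) : ℝ)) / (β i).factorial)) := by
    apply Finset.sum_pos'
    · intro γ _
      apply Finset.prod_nonneg
      intro i _
      positivity
    · refine ⟨⟨fun i => max (α i) (β i), h⟩, Finset.mem_univ _, ?_⟩
      apply Finset.prod_pos
      intro i _
      have h1 : 0 < ((max (α i) (β i)).choose (α i) : ℝ) := by
        exact_mod_cast Nat.choose_pos (le_max_left _ _)
      have h2 : 0 < ((max (α i) (β i)).choose (β i) : ℝ) := by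
        exact_mod_cast Nat.choose_pos (le_max_right _ _)
      have h3 : (0:ℝ) < (α i).factorial := by exact_mod_cast (α i).factorial_pos
      have h4 : (0:ℝ) < (β i).factorial := by exact_mod_cast (β i).factorial_pos
      positivity
  rw [hsum]
  intro hzero
  rcases mul_eq_zero.mp hzero with h1 | h1
  · exact (pow_ne_zero s (by norm_num : (-1:ℝ) ≠ 0)) h1
  · exact (ne_of_gt hpos) h1


open MeasureTheory in
lemma int1d (k : ℕ) : ∫ x in Set.Ioi (0:ℝ), x^k * Real.exp (-x) = (k.factorial : ℝ) := by
  have h := Real.Gamma_eq_integral (s := (k:ℝ)+1) (by positivity)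
  rw [show ((k:ℝ)+1) = ((k:ℕ):ℝ) + 1 by norm_num] at h
  rw [Real.Gamma_nat_eq_factorial] at h
  simp only [add_sub_cancel_right, Real.rpow_natCast] at h
  rw [h]
  apply MeasureTheory.integral_congr_ae
  filter_upwards with x
  ring

lemma orthant_measurable (n : ℕ) : MeasurableSet {x : Fin n → ℝ | ∀ i, 0 < x i} := by
  have : {x : Fin n → ℝ | ∀ i, 0 < x i} = Set.pi Set.univ (fun _ => Set.Ioi (0:ℝ)) := by
    ext x; simp [Set.mem_pi]
  rw [this]; exact MeasurableSet.univ_pi (fun _ => measurableSet_Ioi)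

open MeasureTheory in
lemma int_orthant_prod (n : ℕ) (γ : Fin n → ℕ) :
    ∫ x in {x : Fin n → ℝ | ∀ i, 0 < x i}, ∏ i, ((x i)^(γ i) * Real.exp (-(x i)))
      = ∏ i, ((γ i).factorial : ℝ) := by
  rw [← MeasureTheory.integral_indicator (orthant_measurable n)]
  have hind : (Set.indicator {x : Fin n → ℝ | ∀ i, 0 < x i}
      (fun x => ∏ i, ((x i)^(γ i) * Real.exp (-(x i)))))
      = fun x => ∏ i, (Set.indicator (Set.Ioi (0:ℝ)) (fun t => t^(γ i) * Real.exp (-t)) (x i)) := by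
    funext x
    by_cases hx : ∀ i, 0 < x i
    · rw [Set.indicator_of_mem (show x ∈ {x : Fin n → ℝ | ∀ i, 0 < x i} from hx)]
      exact Finset.prod_congr rfl fun i _ =>
        (Set.indicator_of_mem (show x i ∈ Set.Ioi (0:ℝ) from hx i)
          (fun t => t ^ γ i * Real.exp (-t))).symm
    · rw [Set.indicator_of_notMem (show x ∉ {x : Fin n → ℝ | ∀ i, 0 < x i} from hx)]
      push_neg at hx
      obtain ⟨i, hi⟩ := hx
      exact (Finset.prod_eq_zero (Finset.mem_univ i)
        (Set.indicator_of_notMem (show x i ∉ Set.Ioi (0:ℝ) by simpa using hi)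
          (fun t => t ^ γ i * Real.exp (-t)))).symm
  rw [hind]
  rw [MeasureTheory.volume_pi, MeasureTheory.integral_fintype_prod_eq_prod
    (fun i t => Set.indicator (Set.Ioi (0:ℝ)) (fun s => s^(γ i) * Real.exp (-s)) t)]
  refine Finset.prod_congr rfl fun i _ => ?_
  rw [MeasureTheory.integral_indicator measurableSet_Ioi, int1d]

/-- **Theorem 3.1 (converse direction).** If `|max(α,β)| ≤ d`, there is a `y` with `M_d(y)`
positive definite and of product form whose inverse has a nonzero `(α,β)` entry; moreover `y`
can be chosen as the normalized moment sequence of the product measure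
`e^{-(x₁+⋯+xₙ)} x₁^{σ₁}⋯xₙ^{σₙ} dx` on the positive orthant, for a suitable `σ ∈ ℝ₊ⁿ`. -/
theorem stmt1 (n d : ℕ) (hn : 1 ≤ n) (α β : Fin n → ℕ)
    (hα : degSum α ≤ d) (hβ : degSum β ≤ d)
    (h : degSum (fun i => max (α i) (β i)) ≤ d) :
    ∃ y : (Fin n → ℕ) → ℝ,
      (momMat n d y).PosDef ∧ ProductForm n d y ∧
      (momMat n d y)⁻¹ ⟨α, hα⟩ ⟨β, hβ⟩ ≠ 0 ∧
      ∃ σ : Fin n → ℝ, (∀ i, 0 ≤ σ i) ∧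
        ∀ γ : Fin n → ℕ,
          y γ = (∫ x in {x : Fin n → ℝ | ∀ i, 0 < x i},
                  ((∏ i, x i ^ γ i) * Real.exp (-(∑ i, x i)) * ∏ i, x i ^ σ i)) /
                (∫ x in {x : Fin n → ℝ | ∀ i, 0 < x i},
                  (Real.exp (-(∑ i, x i)) * ∏ i, x i ^ σ i)) := by
  classical
  refine ⟨yfact n, mom_posDef n d, ?_, ?_, fun _ => (0:ℝ), fun i => le_refl 0, ?_⟩
  · -- product form
    intro a _
    have hinner : ∀ i : Fin n, (∏ j, (((Pi.single i (a i) : Fin n → ℕ) j).factorial : ℝ))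
        = ((a i).factorial : ℝ) := by
      intro i
      rw [Finset.prod_eq_single i]
      · rw [Pi.single_eq_same]
      · intro j _ hj; rw [Pi.single_eq_of_ne hj]; simp
      · intro hi; exact absurd (Finset.mem_univ i) hi
    show yfact n a = ∏ i, yfact n (Pi.single i (a i))
    simp only [yfact]
    exact Finset.prod_congr rfl fun i _ => (hinner i).symm
  · rw [mom_inv]
    exact CtC_entry_ne_zero n d α β hα hβ h
  · intro γ
    have hnum : (∫ x in {x : Fin n → ℝ | ∀ i, 0 < x i},
        ((∏ i, x i ^ γ i) * Real.exp (-(∑ i, x i)) * ∏ i, x i ^ (0:ℝ)))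
        = ∏ i, ((γ i).factorial : ℝ) := by
      rw [← int_orthant_prod n γ]
      apply MeasureTheory.integral_congr_ae
      filter_upwards with x
      simp only [Real.rpow_zero, Finset.prod_const_one, mul_one]
      rw [show -(∑ i, x i) = ∑ i, -(x i) by rw [Finset.sum_neg_distrib],
        Real.exp_sum, ← Finset.prod_mul_distrib]
    have hden : (∫ x in {x : Fin n → ℝ | ∀ i, 0 < x i},
        (Real.exp (-(∑ i, x i)) * ∏ i, x i ^ (0:ℝ)))
        = 1 := by
      rw [show (1:ℝ) = ∏ i : Fin n, (((fun _ => 0 : Fin n → ℕ) i).factorial : ℝ) by simp]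
      rw [← int_orthant_prod n (fun _ => 0)]
      apply MeasureTheory.integral_congr_ae
      filter_upwards with x
      simp only [Real.rpow_zero, Finset.prod_const_one, mul_one, pow_zero, one_mul]
      rw [show -(∑ i, x i) = ∑ i, -(x i) by rw [Finset.sum_neg_distrib],
        Real.exp_sum]
    rw [hnum, hden, div_one]
    rfl


end Paper
end

section
/- Let y : ℕⁿ → ℝ with y₀ = 1 be such that M_d(y) is positive definite and has the product form property. Then every orthonormal polynomial p_α with |α| ≤ d has full triangular form: p_α = Σ_{γ ≤ α} ρ_{αγ} X^γ, i.e., the coefficient ρ_{αγ} of X^γ in p_α vanishes whenever γ ≰ α in the FG order. -/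
open scoped BigOperators
open MvPolynomial Matrix

namespace Paper

section Aux

variable {n : ℕ} (y : (Fin n → ℕ) → ℝ)

lemma Ly_eq_sum_of_subset {p : MvPolynomial (Fin n) ℝ} {S : Finset ((Fin n) →₀ ℕ)}
    (h : p.support ⊆ S) : Ly y p = ∑ m ∈ S, p.coeff m * y ⇑m := by
  rw [Ly]
  exact Finset.sum_subset h (fun m _ hm => by
    rw [MvPolynomial.notMem_support_iff.mp hm, zero_mul])

lemma Ly_add (p q : MvPolynomial (Fin n) ℝ) : Ly y (p + q) = Ly y p + Ly y q := by
  classical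
  rw [Ly_eq_sum_of_subset y (MvPolynomial.support_add),
      Ly_eq_sum_of_subset y (Finset.subset_union_left (s₂ := q.support)),
      Ly_eq_sum_of_subset y (Finset.subset_union_right (s₁ := p.support)),
      ← Finset.sum_add_distrib]
  exact Finset.sum_congr rfl fun m _ => by rw [MvPolynomial.coeff_add, add_mul]

lemma Ly_smul (c : ℝ) (p : MvPolynomial (Fin n) ℝ) : Ly y (c • p) = c * Ly y p := by
  rw [Ly_eq_sum_of_subset y (MvPolynomial.support_smul), Ly, Finset.mul_sum]
  exact Finset.sum_congr rfl fun m _ => by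
    rw [MvPolynomial.coeff_smul, smul_eq_mul, mul_assoc]

lemma Ly_zero : Ly y 0 = 0 := by
  simp [Ly]

lemma Ly_sub (p q : MvPolynomial (Fin n) ℝ) : Ly y (p - q) = Ly y p - Ly y q := by
  have := Ly_add y (p - q) q
  rw [sub_add_cancel] at this
  linarith

lemma Ly_sum {ι : Type*} (s : Finset ι) (f : ι → MvPolynomial (Fin n) ℝ) :
    Ly y (∑ i ∈ s, f i) = ∑ i ∈ s, Ly y (f i) := by
  classical
  induction s using Finset.induction_on with
  | empty => simp [Ly_zero]
  | insert _ _ h ih => rw [Finset.sum_insert h, Finset.sum_insert h, Ly_add, ih]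

lemma mono_eq (α : Fin n → ℕ) :
    mono α = MvPolynomial.monomial (Finsupp.equivFunOnFinite.symm α) 1 := by
  classical
  rw [mono, MvPolynomial.monic_monomial_eq, Finsupp.prod]
  refine (Finset.prod_subset (Finset.subset_univ _) ?_).symm
  intro i _ hi
  have h0 : α i = 0 := Finsupp.notMem_support_iff.mp hi
  rw [h0, pow_zero]

lemma mono_coe (m : (Fin n) →₀ ℕ) : mono ⇑m = MvPolynomial.monomial m 1 := by
  rw [mono_eq, Finsupp.equivFunOnFinite_symm_coe]

lemma Ly_monomial (m : (Fin n) →₀ ℕ) (c : ℝ) :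
    Ly y (MvPolynomial.monomial m c) = c * y ⇑m := by
  classical
  rcases eq_or_ne c 0 with rfl | hc
  · simp [Ly_zero]
  · rw [Ly_eq_sum_of_subset y (S := {m}) ?_, Finset.sum_singleton,
      MvPolynomial.coeff_monomial, if_pos rfl]
    rw [MvPolynomial.support_monomial, if_neg hc]

lemma Ly_mono (α : Fin n → ℕ) : Ly y (mono α) = y α := by
  rw [mono_eq, Ly_monomial, one_mul]
  congr 1

lemma mono_mul (α β : Fin n → ℕ) : mono α * mono β = mono (α + β) := by
  rw [mono, mono, mono, ← Finset.prod_mul_distrib]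
  exact Finset.prod_congr rfl fun i _ => by rw [Pi.add_apply, pow_add]

lemma coeffOf_mono (δ γ : Fin n → ℕ) :
    coeffOf (mono δ) γ = if δ = γ then 1 else 0 := by
  classical
  rw [coeffOf, mono_eq, MvPolynomial.coeff_monomial]
  by_cases h : δ = γ
  · subst h; simp
  · rw [if_neg h, if_neg (fun hc => h (Finsupp.equivFunOnFinite.symm.injective hc))]

lemma coeffOf_sub (p q : MvPolynomial (Fin n) ℝ) (γ : Fin n → ℕ) :
    coeffOf (p - q) γ = coeffOf p γ - coeffOf q γ := by
  simp [coeffOf, MvPolynomial.coeff_sub]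

lemma coeffOf_smul (c : ℝ) (p : MvPolynomial (Fin n) ℝ) (γ : Fin n → ℕ) :
    coeffOf (c • p) γ = c * coeffOf p γ := by
  simp [coeffOf, MvPolynomial.coeff_smul]

lemma coeffOf_sum {ι : Type*} (s : Finset ι) (f : ι → MvPolynomial (Fin n) ℝ) (γ : Fin n → ℕ) :
    coeffOf (∑ i ∈ s, f i) γ = ∑ i ∈ s, coeffOf (f i) γ := by
  simp [coeffOf, MvPolynomial.coeff_sum]

lemma coeffOf_coe (p : MvPolynomial (Fin n) ℝ) (m : (Fin n) →₀ ℕ) :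
    coeffOf p ⇑m = p.coeff m := by
  rw [coeffOf, Finsupp.equivFunOnFinite_symm_coe]

/-- Expansion of `Ly` on a product, over the support of the second factor. -/
lemma Ly_mul_eq_sum (f g : MvPolynomial (Fin n) ℝ) :
    Ly y (f * g) = ∑ m ∈ g.support, g.coeff m * Ly y (f * mono ⇑m) := by
  conv_lhs => rw [← g.support_sum_monomial_coeff]
  rw [Finset.mul_sum, Ly_sum]
  refine Finset.sum_congr rfl fun m hm => ?_
  have h1 : (MvPolynomial.monomial m) (g.coeff m) = g.coeff m • mono ⇑m := by
    rw [mono_coe, MvPolynomial.smul_monomial, smul_eq_mul, mul_one]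
  rw [h1, mul_smul_comm, Ly_smul]

lemma Ly_mul_mono (f : MvPolynomial (Fin n) ℝ) (β : Fin n → ℕ) :
    Ly y (f * mono β) = ∑ m ∈ f.support, f.coeff m * y (⇑m + β) := by
  rw [mul_comm, Ly_mul_eq_sum]
  refine Finset.sum_congr rfl fun m _ => ?_
  rw [mono_mul, Ly_mono, add_comm]

end Aux

section Aux2

lemma degSum_single {n : ℕ} (i : Fin n) (a : ℕ) : degSum (Pi.single i a) = a := by
  rw [degSum]
  exact Fintype.sum_pi_single' i a

lemma degSum_le_of_glexLT {n : ℕ} {δ α : Fin n → ℕ} (h : glexLT δ α) :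
    degSum δ ≤ degSum α := by
  rcases h with h | ⟨h, _⟩
  · exact le_of_lt h
  · exact le_of_eq h

lemma glexLE_of_forall_le {n : ℕ} {δ α : Fin n → ℕ} (h : ∀ i, δ i ≤ α i) : glexLE δ α := by
  have hd : degSum δ ≤ degSum α := Finset.sum_le_sum fun i _ => h i
  rcases lt_or_eq_of_le hd with hlt | heq
  · exact Or.inl (Or.inl hlt)
  · refine Or.inr (funext fun i => ?_)
    exact (Finset.sum_eq_sum_iff_of_le fun i _ => h i).mp heq i (Finset.mem_univ i)

lemma exists_lt_of_glexLT {n : ℕ} {β α : Fin n → ℕ} (h : glexLT β α) : ∃ i, β i < α i := by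
  rcases h with h | ⟨_, i, _, hi⟩
  · by_contra hno
    push_neg at hno
    exact absurd (Finset.sum_le_sum fun i _ => hno i : degSum α ≤ degSum β) (not_le.mpr h)
  · exact ⟨i, hi⟩

/-- Positivity of `L_y(f²)` for nonzero `f` supported in degree `≤ d`. -/
lemma posLy {n d : ℕ} {y : (Fin n → ℕ) → ℝ} (hpd : (momMat n d y).PosDef)
    (f : MvPolynomial (Fin n) ℝ) (hf : f ≠ 0)
    (hdeg : ∀ m ∈ f.support, degSum ⇑m ≤ d) : 0 < Ly y (f * f) := by
  classical
  set ι : MIdx n d → ((Fin n) →₀ ℕ) := fun a => Finsupp.equivFunOnFinite.symm a.1 with hι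
  have hco : ∀ a : MIdx n d, ⇑(ι a) = a.1 := fun a => rfl
  have hιinj : Function.Injective ι := fun a b h =>
    Subtype.ext (Finsupp.equivFunOnFinite.symm.injective h)
  set S : Finset ((Fin n) →₀ ℕ) := Finset.univ.image ι with hS
  have hsub : f.support ⊆ S := by
    intro m hm
    refine Finset.mem_image.mpr ⟨⟨⇑m, hdeg m hm⟩, Finset.mem_univ _, ?_⟩
    exact Finsupp.equivFunOnFinite_symm_coe m
  set v : MIdx n d → ℝ := fun a => f.coeff (ι a) with hv
  have hvne : v ≠ 0 := by
    obtain ⟨m, hm⟩ := MvPolynomial.support_nonempty.mpr hf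
    intro h0
    have h1 : v ⟨⇑m, hdeg m hm⟩ = 0 := by rw [h0]; rfl
    rw [hv] at h1
    simp only [hι, Finsupp.equivFunOnFinite_symm_coe m] at h1
    exact MvPolynomial.mem_support_iff.mp hm h1
  have key : Ly y (f * f) = star v ⬝ᵥ (momMat n d y) *ᵥ v := by
    have e1 : Ly y (f * f) = ∑ m ∈ S, ∑ m' ∈ S, f.coeff m * (f.coeff m' * y (⇑m' + ⇑m)) := by
      rw [Ly_mul_eq_sum]
      rw [Finset.sum_subset hsub (fun m _ hm => by
        rw [MvPolynomial.notMem_support_iff.mp hm, zero_mul])]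
      refine Finset.sum_congr rfl fun m _ => ?_
      rw [Ly_mul_mono, Finset.sum_subset hsub (fun m' _ hm' => by
        rw [MvPolynomial.notMem_support_iff.mp hm', zero_mul]), Finset.mul_sum]
    rw [e1, hS, Finset.sum_image (fun a _ b _ h => hιinj h)]
    have e2 : star v ⬝ᵥ (momMat n d y) *ᵥ v =
        ∑ a : MIdx n d, v a * ∑ b : MIdx n d, y (a.1 + b.1) * v b := by
      simp [dotProduct, Matrix.mulVec, momMat, star]
    rw [e2]
    refine Finset.sum_congr rfl fun a _ => ?_
    rw [Finset.sum_image (fun a _ b _ h => hιinj h), Finset.mul_sum]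
    refine Finset.sum_congr rfl fun b _ => ?_
    simp only [hv]
    rw [hco, hco, add_comm (b.1) (a.1)]
    ring
  rw [key]
  exact hpd.dotProduct_mulVec_pos hvne

/-- Existence of monic "orthogonal" univariate coefficient vectors in each coordinate. -/
lemma univOrth {n d : ℕ} {y : (Fin n → ℕ) → ℝ} (hpd : (momMat n d y).PosDef)
    (i : Fin n) (a : ℕ) (had : a ≤ d) :
    ∃ c : ℕ → ℝ, c a = 1 ∧
      ∀ b' < a, ∑ b ∈ Finset.range (a + 1), c b * y (Pi.single i (b + b')) = 0 := by
  classical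
  set H : Matrix (Fin a) (Fin a) ℝ := Matrix.of fun j k => y (Pi.single i (j.1 + k.1)) with hH
  have hker : ∀ u : Fin a → ℝ, H *ᵥ u = 0 → u = 0 := by
    intro u hu
    set g : MvPolynomial (Fin n) ℝ := ∑ j : Fin a, u j • mono (Pi.single i j.1) with hg
    have hLg : ∀ β : Fin n → ℕ,
        Ly y (g * mono β) = ∑ j : Fin a, u j * y (Pi.single i j.1 + β) := by
      intro β
      rw [hg, Finset.sum_mul, Ly_sum]
      exact Finset.sum_congr rfl fun j _ => by
        rw [smul_mul_assoc, Ly_smul, mono_mul, Ly_mono]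
    have hrow : ∀ j : Fin a, ∑ k : Fin a, u k * y (Pi.single i (k.1 + j.1)) = 0 := by
      intro j
      have h0 := congrFun hu j
      simp only [Matrix.mulVec, dotProduct, hH, Matrix.of_apply, Pi.zero_apply] at h0
      rw [← h0]
      exact Finset.sum_congr rfl fun k _ => by rw [mul_comm, Nat.add_comm k.1 j.1]
    have e1 : Ly y (g * g) = ∑ j : Fin a, u j * Ly y (g * mono (Pi.single i j.1)) := by
      nth_rewrite 2 [hg]
      rw [Finset.mul_sum, Ly_sum]
      exact Finset.sum_congr rfl fun j _ => by rw [mul_smul_comm, Ly_smul]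
    have hgg : Ly y (g * g) = 0 := by
      rw [e1]
      refine Finset.sum_eq_zero fun j _ => ?_
      rw [hLg, show (∑ k : Fin a, u k * y (Pi.single i k.1 + Pi.single i j.1))
          = ∑ k : Fin a, u k * y (Pi.single i (k.1 + j.1)) from
        Finset.sum_congr rfl fun k _ => by rw [← Pi.single_add], hrow j, mul_zero]
    have hg0 : g = 0 := by
      by_contra hne
      have hs : ∀ m ∈ g.support, degSum ⇑m ≤ d := by
        intro m hm
        rw [hg] at hm
        obtain ⟨j, _, hj⟩ := Finset.mem_biUnion.mp (MvPolynomial.support_sum hm)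
        have h2 := MvPolynomial.support_smul hj
        rw [mono_eq, MvPolynomial.support_monomial, if_neg one_ne_zero] at h2
        have h3 : m = Finsupp.equivFunOnFinite.symm (Pi.single i j.1) :=
          Finset.mem_singleton.mp h2
        have h4 : ⇑m = Pi.single i j.1 := by rw [h3]; rfl
        rw [h4, degSum_single]
        exact le_trans (le_of_lt j.2) had
      exact absurd hgg (ne_of_gt (posLy hpd g hne hs))
    funext j
    have hcoef : coeffOf g (Pi.single i j.1) = u j := by
      rw [hg, coeffOf_sum]
      have hterm : ∀ k : Fin a, coeffOf (u k • mono (Pi.single i k.1)) (Pi.single i j.1)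
          = if k = j then u k else 0 := by
        intro k
        rw [coeffOf_smul, coeffOf_mono]
        by_cases h : k = j
        · subst h; simp
        · have hne : (Pi.single i k.1 : Fin n → ℕ) ≠ Pi.single i j.1 := by
            intro hc
            exact h (Fin.ext (by simpa using congrFun hc i))
          rw [if_neg hne, mul_zero, if_neg h]
      rw [Finset.sum_congr rfl fun k _ => hterm k]
      simp
    rw [hg0] at hcoef
    simpa [coeffOf] using hcoef.symm
  have hinj : Function.Injective H.mulVecLin :=
    LinearMap.ker_eq_bot.mp (LinearMap.ker_eq_bot'.mpr fun u hu =>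
      hker u (by rwa [Matrix.mulVecLin_apply] at hu))
  obtain ⟨u, hu⟩ := LinearMap.injective_iff_surjective.mp hinj
    (fun j => -y (Pi.single i (a + j.1)))
  refine ⟨fun b => if hb : b < a then u ⟨b, hb⟩ else if b = a then 1 else 0, ?_, ?_⟩
  · beta_reduce
    rw [dif_neg (lt_irrefl a), if_pos rfl]
  · intro b' hb'
    beta_reduce
    rw [Finset.sum_range_succ, dif_neg (lt_irrefl a), if_pos rfl, one_mul]
    have e3 : ∑ b ∈ Finset.range a,
        (if hb : b < a then u ⟨b, hb⟩ else if b = a then 1 else 0) * y (Pi.single i (b + b'))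
        = ∑ j : Fin a, u j * y (Pi.single i (j.1 + b')) := by
      rw [Finset.sum_range fun b =>
        (if hb : b < a then u ⟨b, hb⟩ else if b = a then 1 else 0) * y (Pi.single i (b + b'))]
      exact Finset.sum_congr rfl fun j _ => by rw [dif_pos j.2]
    rw [e3]
    have h4 := congrFun hu ⟨b', hb'⟩
    rw [Matrix.mulVecLin_apply] at h4
    have e4 : ∑ j : Fin a, u j * y (Pi.single i (j.1 + b')) = (H *ᵥ u) ⟨b', hb'⟩ := by
      simp only [Matrix.mulVec, dotProduct, hH, Matrix.of_apply]
      exact Finset.sum_congr rfl fun k _ => by rw [mul_comm, Nat.add_comm k.1 b']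
    rw [e4, h4]
    ring

end Aux2

/-- **Full triangularity under product form (Section 3.1, (3.4)).** If `M_d(y)` is positive
definite and has the product form property, then each orthonormal polynomial `p_α`, `|α| ≤ d`,
has full triangular form: its coefficient on `X^γ` vanishes unless `γ ≤ α` in the FG order. -/
theorem stmt2 (n d : ℕ) (hn : 1 ≤ n) (y : (Fin n → ℕ) → ℝ) (hy0 : y 0 = 1)
    (hpd : (momMat n d y).PosDef) (hprod : ProductForm n d y)
    (p : (Fin n → ℕ) → MvPolynomial (Fin n) ℝ) (hp : IsONFamily n d y p)
    (α γ : Fin n → ℕ) (hα : degSum α ≤ d) (hγ : ¬ ∀ i, γ i ≤ α i) :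
    coeffOf (p α) γ = 0 := by
  classical
  have hex : ∀ i : Fin n, ∃ c : ℕ → ℝ, c (α i) = 1 ∧
      ∀ b' < α i, ∑ b ∈ Finset.range (α i + 1), c b * y (Pi.single i (b + b')) = 0 :=
    fun i => univOrth hpd i (α i) (le_trans (apply_le_degSum α i) hα)
  choose c hc1 hc2 using hex
  set T : Finset (Fin n → ℕ) := Fintype.piFinset (fun i => Finset.range (α i + 1)) with hT
  set q : MvPolynomial (Fin n) ℝ := ∑ t ∈ T, (∏ i, c i (t i)) • mono t with hq
  have hmemT : ∀ t ∈ T, ∀ i, t i ≤ α i := fun t ht i =>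
    Nat.lt_succ_iff.mp (Finset.mem_range.mp (Fintype.mem_piFinset.mp ht i))
  have hαT : α ∈ T := Fintype.mem_piFinset.mpr fun i => Finset.mem_range.mpr (Nat.lt_succ_self _)
  have hqco : ∀ δ : Fin n → ℕ, coeffOf q δ = if δ ∈ T then ∏ i, c i (δ i) else 0 := by
    intro δ
    rw [hq, coeffOf_sum]
    have hterm : ∀ t ∈ T, coeffOf ((∏ i, c i (t i)) • mono t) δ
        = if t = δ then ∏ i, c i (t i) else 0 := by
      intro t _
      rw [coeffOf_smul, coeffOf_mono, mul_ite, mul_one, mul_zero]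
    rw [Finset.sum_congr rfl hterm]
    rw [Finset.sum_ite_eq' T δ (fun t => ∏ i, c i (t i))]
  have hq1 : coeffOf q α = 1 := by
    rw [hqco, if_pos hαT]
    exact Finset.prod_eq_one fun i _ => hc1 i
  have hqorth : ∀ β : Fin n → ℕ, degSum β ≤ d → glexLT β α → Ly y (q * mono β) = 0 := by
    intro β hβd hβα
    have e1 : Ly y (q * mono β) = ∑ t ∈ T, (∏ i, c i (t i)) * y (t + β) := by
      rw [hq, Finset.sum_mul, Ly_sum]
      exact Finset.sum_congr rfl fun t _ => by
        rw [smul_mul_assoc, Ly_smul, mono_mul, Ly_mono]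
    have e2 : ∀ t ∈ T, (∏ i, c i (t i)) * y (t + β)
        = ∏ i, (c i (t i) * y (Pi.single i (t i + β i))) := by
      intro t ht
      have hdt : degSum t ≤ degSum α := Finset.sum_le_sum fun i _ => hmemT t ht i
      have hsum : degSum (t + β) = degSum t + degSum β := Finset.sum_add_distrib
      have hdeg : degSum (t + β) ≤ 2 * d := by omega
      have h3 : y (t + β) = ∏ i, y (Pi.single i (t i + β i)) := by
        simpa using hprod (t + β) hdeg
      rw [h3, Finset.prod_mul_distrib]
    obtain ⟨i0, hi0⟩ : ∃ i, β i < α i := exists_lt_of_glexLT hβα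
    rw [e1, Finset.sum_congr rfl e2, hT,
      ← Finset.prod_univ_sum (fun i => Finset.range (α i + 1))
        (fun i b => c i b * y (Pi.single i (b + β i)))]
    exact Finset.prod_eq_zero (Finset.mem_univ i0) (hc2 i0 (β i0) hi0)
  set cα : ℝ := coeffOf (p α) α with hcα
  set r : MvPolynomial (Fin n) ℝ := p α - cα • q with hr
  have hrcoef : ∀ δ : Fin n → ℕ, coeffOf r δ ≠ 0 → glexLT δ α := by
    intro δ hδ
    have h1 : glexLE δ α := by
      by_cases h : coeffOf (p α) δ = 0
      · have h3 : coeffOf q δ ≠ 0 := by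
          intro h2
          apply hδ
          rw [hr, coeffOf_sub, coeffOf_smul, h, h2, mul_zero, sub_zero]
        rw [hqco] at h3
        have hmem : δ ∈ T := by
          by_contra hm
          rw [if_neg hm] at h3
          exact h3 rfl
        exact glexLE_of_forall_le fun i => hmemT δ hmem i
      · exact hp.span α hα δ h
    rcases h1 with h1 | rfl
    · exact h1
    · exfalso
      apply hδ
      rw [hr, coeffOf_sub, coeffOf_smul, hq1, mul_one, ← hcα, sub_self]
  have hrorth : ∀ m ∈ r.support, Ly y (r * mono ⇑m) = 0 := by
    intro m hm
    have hne : coeffOf r ⇑m ≠ 0 := by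
      rw [coeffOf_coe]
      exact MvPolynomial.mem_support_iff.mp hm
    have hlt := hrcoef ⇑m hne
    have hdm : degSum ⇑m ≤ d := le_trans (degSum_le_of_glexLT hlt) hα
    have h1 := hp.lower α ⇑m hα hdm hlt
    have h2 := hqorth ⇑m hdm hlt
    rw [hr, sub_mul, smul_mul_assoc, Ly_sub, Ly_smul, h1, h2, mul_zero, sub_zero]
  have hrr : Ly y (r * r) = 0 := by
    rw [Ly_mul_eq_sum]
    exact Finset.sum_eq_zero fun m hm => by rw [hrorth m hm, mul_zero]
  have hr0 : r = 0 := by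
    by_contra hne
    have hs : ∀ m ∈ r.support, degSum ⇑m ≤ d := fun m hm =>
      le_trans (degSum_le_of_glexLT (hrcoef ⇑m (by
        rw [coeffOf_coe]; exact MvPolynomial.mem_support_iff.mp hm))) hα
    exact absurd hrr (ne_of_gt (posLy hpd r hne hs))
  have hfinal : p α = cα • q := by
    have := sub_eq_zero.mp (hr ▸ hr0)
    exact this
  rw [hfinal, coeffOf_smul, hqco, if_neg, mul_zero]
  intro hγT
  exact hγ fun i => hmemT γ hγT i

end Paper
end

section
/- Let d ≥ 1 and let μ be a probability measure on ℝ³, with coordinates (X, Y₁, Y₂), all of whose absolute moments of order ≤ 2d are finite. Then there exists a sequence (φ_t)_{t∈ℕ} of probability measures on ℝ³, each supported on finitely many points whose first coordinates are pairwise distinct (so that under each φ_t the coordinates Y₁ and Y₂ are conditionally independent given X), such that for all i, j, k with i+j+k ≤ 2d, ∫ X^i Y₁^j Y₂^k dφ_t → ∫ X^i Y₁^j Y₂^k dμ as t → ∞. In particular, the moment matrices satisfy M_d(φ_t) → M_d(μ) entrywise. -/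
open scoped BigOperators
open MvPolynomial Matrix

namespace Paper

open MeasureTheory Filter

/-- The moment matrix `M_d(ν)` of a measure `ν` on `ℝ³` (coordinates `(X, Y₁, Y₂)`). -/
noncomputable def momMatMeas (d : ℕ) (ν : Measure (Fin 3 → ℝ)) :
    Matrix (MIdx 3 d) (MIdx 3 d) ℝ :=
  Matrix.of fun a b => ∫ v : Fin 3 → ℝ, ∏ i, v i ^ (a.1 i + b.1 i) ∂ν


section MomentApprox
open MeasureTheory Filter

/-- The vector of all monomials of degree at most `2d` on `ℝ³`. -/
noncomputable def momFn (d : ℕ) : (Fin 3 → ℝ) → (MIdx 3 (2*d) → ℝ) :=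
  fun v γ => ∏ i, v i ^ γ.1 i

lemma momFn_continuous (d : ℕ) : Continuous (momFn d) :=
  continuous_pi fun γ => continuous_finset_prod _ fun i _ => (continuous_apply i).pow _

lemma momFn_integrable (d : ℕ) (μ : Measure (Fin 3 → ℝ))
    (hmom : ∀ γ : Fin 3 → ℕ, degSum γ ≤ 2*d →
      Integrable (fun v : Fin 3 → ℝ => ∏ i, |v i| ^ γ i) μ) :
    Integrable (momFn d) μ := by
  have hg : Integrable (fun v => ∑ γ : MIdx 3 (2*d), ∏ i, |v i| ^ γ.1 i) μ :=
    integrable_finset_sum _ fun γ _ => hmom γ.1 γ.2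
  refine hg.mono' ((momFn_continuous d).aestronglyMeasurable) ?_
  filter_upwards with v
  rw [pi_norm_le_iff_of_nonneg (by positivity)]
  intro γ
  rw [Real.norm_eq_abs]
  simp only [momFn, Finset.abs_prod, abs_pow]
  exact Finset.single_le_sum (f := fun γ : MIdx 3 (2*d) => ∏ i, |v i| ^ γ.1 i)
    (fun _ _ => by positivity) (Finset.mem_univ γ)

/-- Moment vectors of finitely supported prob. measures with pairwise distinct 1st coords. -/
def TSet (d : ℕ) : Set (MIdx 3 (2*d) → ℝ) :=
  {z | ∃ (m : ℕ) (w : Fin m → ℝ) (x : Fin m → (Fin 3 → ℝ)),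
    (∀ j, 0 ≤ w j) ∧ (∑ j, w j) = 1 ∧ Function.Injective (fun j => x j 0) ∧
    z = ∑ j, w j • momFn d (x j)}

lemma exists_good_delta {m : ℕ} (x : Fin m → (Fin 3 → ℝ)) (n : ℕ) :
    ∃ δ : ℝ, 0 < δ ∧ δ < 1/(n+1) ∧
      Function.Injective (fun j : Fin m => x j 0 + δ * ((j : ℝ) + 1)) := by
  set S : Set ℝ := Set.range (fun p : Fin m × Fin m =>
    (x p.2 0 - x p.1 0) / (((p.1 : ℕ) : ℝ) - ((p.2 : ℕ) : ℝ))) with hS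
  have hSfin : S.Finite := Set.finite_range _
  have hne : (Set.Ioo (0:ℝ) (1/(n+1)) \ S).Nonempty := by
    refine Set.Infinite.nonempty (Set.Infinite.diff ?_ hSfin)
    have : (0:ℝ) < 1/(n+1) := by positivity
    exact Set.Ioo_infinite this
  obtain ⟨δ, hδmem, hδS⟩ := hne
  refine ⟨δ, hδmem.1, hδmem.2, ?_⟩
  intro j k h
  have h' : x j 0 + δ * (((j:ℕ):ℝ) + 1) = x k 0 + δ * (((k:ℕ):ℝ) + 1) := h
  by_contra hjk
  have hvne : ((j : ℕ) : ℝ) ≠ ((k : ℕ) : ℝ) := by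
    intro hh; exact hjk (Fin.ext (Nat.cast_injective hh))
  apply hδS
  refine ⟨(j, k), ?_⟩
  show (x k 0 - x j 0) / (((j:ℕ):ℝ) - ((k:ℕ):ℝ)) = δ
  rw [div_eq_iff (sub_ne_zero.mpr hvne)]
  linear_combination -h'

lemma sum_mem_closure_TSet (d : ℕ) {m : ℕ} (w : Fin m → ℝ) (x : Fin m → (Fin 3 → ℝ))
    (h0 : ∀ j, 0 ≤ w j) (h1 : (∑ j, w j) = 1) :
    (∑ j, w j • momFn d (x j)) ∈ closure (TSet d) := by
  classical
  set upd : Fin m → ℝ → (Fin 3 → ℝ) :=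
    fun j t => Function.update (x j) 0 (x j 0 + t * ((j : ℝ) + 1)) with hupd
  set g : ℝ → (MIdx 3 (2*d) → ℝ) := fun t => ∑ j, w j • momFn d (upd j t) with hgdef
  have hgc : Continuous g := by
    refine continuous_finset_sum _ fun j _ => Continuous.const_smul ?_ (w j)
    exact (momFn_continuous d).comp (continuous_const.update 0 (by fun_prop))
  have hg0 : g 0 = ∑ j, w j • momFn d (x j) := by
    simp [hgdef, hupd, Function.update_eq_self]
  have hδ : ∀ n : ℕ, ∃ δ : ℝ, 0 < δ ∧ δ < 1/(n+1) ∧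
      Function.Injective (fun j : Fin m => x j 0 + δ * ((j : ℝ) + 1)) :=
    exists_good_delta x
  choose δ hδ0 hδlt hδinj using hδ
  have hδtend : Tendsto δ atTop (nhds 0) := by
    refine tendsto_of_tendsto_of_tendsto_of_le_of_le (g := fun _ : ℕ => (0:ℝ))
      (h := fun n : ℕ => 1/((n:ℝ)+1)) tendsto_const_nhds
      tendsto_one_div_add_atTop_nhds_zero_nat (fun n => (hδ0 n).le) (fun n => (hδlt n).le)
  refine mem_closure_of_tendsto (b := atTop) (f := fun n : ℕ => g (δ n)) ?_ ?_
  · rw [← hg0]; exact (hgc.tendsto 0).comp hδtend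
  · filter_upwards with n
    refine ⟨m, w, fun j => upd j (δ n), h0, h1, ?_, rfl⟩
    have : (fun j : Fin m => upd j (δ n) 0) =
        (fun j : Fin m => x j 0 + δ n * ((j : ℝ) + 1)) := by
      funext j; simp [hupd]
    rw [this]
    exact hδinj n

lemma hull_subset (d : ℕ) :
    convexHull ℝ (Set.range (momFn d)) ⊆ closure (TSet d) := by
  intro z hz
  rw [convexHull_eq] at hz
  obtain ⟨ι, t, w, zf, h0, h1, hmem, hcm⟩ := hz
  have hx : ∀ i : t, ∃ v, momFn d v = zf i := fun i => hmem i i.2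
  choose x hxv using hx
  have e := t.equivFin
  have hz' : z = ∑ j : Fin t.card, w (e.symm j) • momFn d (x (e.symm j)) := by
    rw [← hcm, Finset.centerMass_eq_of_sum_1 _ _ h1]
    rw [← Finset.sum_coe_sort t (fun i => w i • zf i)]
    rw [← Equiv.sum_comp e.symm (fun i : t => w i • zf ↑i)]
    exact Finset.sum_congr rfl fun j _ => by rw [hxv (e.symm j)]
  rw [hz']
  refine sum_mem_closure_TSet d _ _ (fun j => h0 _ (e.symm j).2) ?_
  rw [Equiv.sum_comp e.symm (fun i : t => w ↑i), Finset.sum_coe_sort t w]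
  exact h1

lemma TSet_measure (d : ℕ) {z : MIdx 3 (2*d) → ℝ} (hz : z ∈ TSet d) :
    ∃ φ : Measure (Fin 3 → ℝ), IsProbabilityMeasure φ ∧
      (∃ s : Finset (Fin 3 → ℝ),
        (∀ u ∈ s, ∀ v ∈ s, u ≠ v → u 0 ≠ v 0) ∧ φ ((↑s : Set (Fin 3 → ℝ)))ᶜ = 0) ∧
      ∀ γ : MIdx 3 (2*d), ∫ v, ∏ i, v i ^ γ.1 i ∂φ = z γ := by
  classical
  obtain ⟨m, w, x, h0, h1, hinj, rfl⟩ := hz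
  set φ : Measure (Fin 3 → ℝ) :=
    ∑ j : Fin m, ENNReal.ofReal (w j) • Measure.dirac (x j) with hφ
  have hint : ∀ (g : (Fin 3 → ℝ) → ℝ) (j : Fin m),
      Integrable g (ENNReal.ofReal (w j) • Measure.dirac (x j)) := by
    intro g j
    refine Integrable.smul_measure ?_ ENNReal.ofReal_ne_top
    exact (integrable_const (g (x j))).congr (MeasureTheory.ae_eq_dirac g).symm
  refine ⟨φ, ?_, ?_, ?_⟩
  · constructor
    rw [hφ, Measure.finset_sum_apply]
    simp only [Measure.smul_apply, smul_eq_mul, MeasureTheory.measure_univ, mul_one]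
    rw [← ENNReal.ofReal_sum_of_nonneg (fun j _ => h0 j), h1, ENNReal.ofReal_one]
  · refine ⟨Finset.image x Finset.univ, ?_, ?_⟩
    · rintro u hu v hv huv
      obtain ⟨j, -, rfl⟩ := Finset.mem_image.mp hu
      obtain ⟨k, -, rfl⟩ := Finset.mem_image.mp hv
      intro h0eq
      exact huv (by rw [hinj h0eq])
    · have hms : MeasurableSet ((↑(Finset.image x Finset.univ) : Set (Fin 3 → ℝ)))ᶜ :=
        (Finset.measurableSet _).compl
      rw [hφ, Measure.finset_sum_apply]
      refine Finset.sum_eq_zero fun j _ => ?_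
      rw [Measure.smul_apply, Measure.dirac_apply' _ hms]
      rw [Set.indicator_of_notMem (by simp), smul_zero]
  · intro γ
    rw [hφ, integral_finset_sum_measure (fun j _ => hint _ j)]
    have : ∀ j : Fin m,
        ∫ v, ∏ i, v i ^ γ.1 i ∂(ENNReal.ofReal (w j) • Measure.dirac (x j)) =
          w j * ∏ i, x j i ^ γ.1 i := by
      intro j
      rw [integral_smul_measure, integral_dirac, ENNReal.toReal_ofReal (h0 j), smul_eq_mul]
    simp only [this, Finset.sum_apply, Pi.smul_apply, smul_eq_mul]
    rfl

end MomentApprox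


/-- **Section 6.3.** Any probability measure `μ` on `ℝ³` with finite absolute moments up to
order `2d` is the limit, in the sense of moments of order `≤ 2d`, of finitely supported
probability measures `φ_t` whose support points have pairwise distinct first coordinates
(so that `Y₁` and `Y₂` are conditionally independent given `X` under each `φ_t`); in
particular `M_d(φ_t) → M_d(μ)` entrywise. -/
theorem stmt14 (d : ℕ) (hd : 1 ≤ d) (μ : Measure (Fin 3 → ℝ)) [IsProbabilityMeasure μ]
    (hmom : ∀ γ : Fin 3 → ℕ, degSum γ ≤ 2*d →
      Integrable (fun v : Fin 3 → ℝ => ∏ i, |v i| ^ γ i) μ) :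
    ∃ φ : ℕ → Measure (Fin 3 → ℝ),
      (∀ t, IsProbabilityMeasure (φ t)) ∧
      (∀ t, ∃ s : Finset (Fin 3 → ℝ),
        (∀ u ∈ s, ∀ v ∈ s, u ≠ v → u 0 ≠ v 0) ∧
        φ t ((↑s : Set (Fin 3 → ℝ))ᶜ) = 0) ∧
      (∀ γ : Fin 3 → ℕ, degSum γ ≤ 2*d →
        Tendsto (fun t => ∫ v : Fin 3 → ℝ, ∏ i, v i ^ γ i ∂(φ t)) atTop
          (nhds (∫ v : Fin 3 → ℝ, ∏ i, v i ^ γ i ∂μ))) ∧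
      (∀ a b : MIdx 3 d,
        Tendsto (fun t => momMatMeas d (φ t) a b) atTop (nhds (momMatMeas d μ a b))) := by
  classical
  have hfi : Integrable (momFn d) μ := momFn_integrable d μ hmom
  set M : MIdx 3 (2*d) → ℝ := ∫ v, momFn d v ∂μ with hM
  have hMmem : M ∈ closure (TSet d) := by
    have h1 : M ∈ closure (convexHull ℝ (Set.range (momFn d))) :=
      Convex.integral_mem ((convex_convexHull ℝ _).closure) isClosed_closure
        (Filter.Eventually.of_forall fun v =>
          subset_closure (subset_convexHull ℝ _ (Set.mem_range_self v))) hfi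
    exact closure_minimal (hull_subset d) isClosed_closure h1
  obtain ⟨u, huT, huM⟩ := mem_closure_iff_seq_limit.mp hMmem
  choose φ hprob hsupp hmomφ using fun t => TSet_measure d (huT t)
  have hMγ : ∀ γ : MIdx 3 (2*d), M γ = ∫ v, ∏ i, v i ^ γ.1 i ∂μ := by
    intro γ
    have h := (ContinuousLinearMap.proj (R := ℝ)
      (φ := fun _ : MIdx 3 (2*d) => ℝ) γ).integral_comp_comm hfi
    exact h.symm
  have key : ∀ γ : Fin 3 → ℕ, degSum γ ≤ 2*d →
      Tendsto (fun t => ∫ v, ∏ i, v i ^ γ i ∂(φ t)) atTop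
        (nhds (∫ v, ∏ i, v i ^ γ i ∂μ)) := by
    intro γ hγ
    have h1 : (fun t => ∫ v, ∏ i, v i ^ γ i ∂(φ t)) = fun t => u t ⟨γ, hγ⟩ := by
      funext t; exact hmomφ t ⟨γ, hγ⟩
    rw [h1, ← hMγ ⟨γ, hγ⟩]
    exact tendsto_pi_nhds.mp huM ⟨γ, hγ⟩
  refine ⟨φ, hprob, hsupp, key, ?_⟩
  intro a b
  have hab : degSum (a.1 + b.1) ≤ 2*d := by
    have ha := a.2; have hb := b.2
    simp only [degSum, Pi.add_apply, Finset.sum_add_distrib] at *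
    omega
  have h := key (a.1 + b.1) hab
  simp only [momMatMeas, Matrix.of_apply]
  simpa [Pi.add_apply] using h


end Paper
end
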